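/- arXiv:1207.3038 — 8 statements merged into one kernel-verified Lean document; each statement's English description precedes it below -/
import Mathlib

section
/- Let S be the unilateral shift on ℓ²(ℕ) (S e_n = e_{n+1}) and d(λ) the diagonal operator d(λ) e_n = λⁿ e_n for a fixed λ ∈ ℂ with |λ| = 1 and λ ≠ 1. Then u := d(λ)·S and v := S are isometries satisfying u·v = λ·v·u, but u*·v ≠ conj(λ)·v·u*. -/
/-!
Both `u` and `v` are weighted shifts `e n ↦ c n • e (n + 1)` with unimodular weights, and the
adjoint of such a shift moves `e (n + 1)` back to `conj (c n) • e n`, so both are isometries.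
The relation `u* v = conj λ • v u*` fails on `e 0`: the adjoint `u*` kills `e 0`, while
`u* (v (e 0)) = u* (e 1) = conj λ • e 0 ≠ 0`.
-/

open scoped InnerProductSpace ComplexConjugate

namespace HilbertBasis

variable {ι 𝕜 E : Type*} [RCLike 𝕜] [NormedAddCommGroup E] [InnerProductSpace 𝕜 E]

theorem ext_inner_left (b : HilbertBasis ι 𝕜 E) {x y : E} (h : ∀ i, ⟪b i, x⟫_𝕜 = ⟪b i, y⟫_𝕜) :
    x = y :=
  b.repr.injective <| lp.ext <| funext fun i => by simp only [b.repr_apply_apply, h]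

theorem continuousLinearMap_ext {F : Type*} [TopologicalSpace F] [AddCommGroup F] [Module 𝕜 F]
    [T2Space F] (b : HilbertBasis ι 𝕜 E) {A B : E →L[𝕜] F} (h : ∀ i, A (b i) = B (b i)) :
    A = B :=
  ContinuousLinearMap.ext_on (Submodule.dense_iff_topologicalClosure_eq_top.mpr b.dense_span)
    (Set.forall_mem_range.mpr h)

variable [CompleteSpace E] (b : HilbertBasis ℕ 𝕜 E) {T : E →L[𝕜] E} {c : ℕ → 𝕜}

theorem star_weightedShift_apply_zero (hT : ∀ n, T (b n) = c n • b (n + 1)) :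
    star T (b 0) = 0 :=
  b.ext_inner_left fun m => by
    rw [ContinuousLinearMap.star_eq_adjoint, ContinuousLinearMap.adjoint_inner_right, hT,
      inner_smul_left, b.orthonormal.inner_eq_zero (by omega), mul_zero, inner_zero_right]

theorem star_weightedShift_apply_succ (hT : ∀ n, T (b n) = c n • b (n + 1)) (n : ℕ) :
    star T (b (n + 1)) = conj (c n) • b n :=
  b.ext_inner_left fun m => by
    rw [ContinuousLinearMap.star_eq_adjoint, ContinuousLinearMap.adjoint_inner_right, hT,
      inner_smul_left, inner_smul_right, orthonormal_iff_ite.mp b.orthonormal,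
      orthonormal_iff_ite.mp b.orthonormal]
    by_cases hmn : m = n
    · subst hmn; simp
    · simp [hmn]

theorem star_mul_self_weightedShift (hT : ∀ n, T (b n) = c n • b (n + 1))
    (hc : ∀ n, ‖c n‖ = 1) : star T * T = 1 :=
  b.continuousLinearMap_ext fun n => by
    rw [mul_apply_eq_comp, hT, map_smul, b.star_weightedShift_apply_succ hT, smul_smul,
      RCLike.mul_conj, hc, RCLike.ofReal_one, one_pow, one_smul, one_apply_eq_self]

end HilbertBasis

theorem stmt_1_general {H : Type*} [NormedAddCommGroup H] [InnerProductSpace ℂ H] [CompleteSpace H]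
    (e : HilbertBasis ℕ ℂ H) (l : ℂ) (hl : ‖l‖ = 1)
    (S D : H →L[ℂ] H)
    (hS : ∀ n : ℕ, S (e n) = e (n + 1))
    (hD : ∀ n : ℕ, D (e n) = l ^ n • e n)
    (u v : H →L[ℂ] H) (hu : u = D * S) (hv : v = S) :
    star u * u = 1 ∧ star v * v = 1 ∧ u * v = l • (v * u) ∧
      star u * v ≠ (starRingEnd ℂ) l • (v * star u) := by
  subst u v
  have hDS : ∀ n, (D * S) (e n) = l ^ (n + 1) • e (n + 1) := fun n => by
    rw [mul_apply_eq_comp, hS, hD]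
  have hS₁ : ∀ n, S (e n) = (1 : ℂ) • e (n + 1) := fun n => by rw [one_smul, hS]
  refine ⟨e.star_mul_self_weightedShift hDS (by simp [hl]),
    e.star_mul_self_weightedShift hS₁ (by simp), ?_, fun h => ?_⟩
  · refine e.continuousLinearMap_ext fun n => ?_
    rw [mul_apply_eq_comp, hS, hDS, smul_apply, mul_apply_eq_comp, hDS, map_smul, hS, smul_smul,
      ← pow_succ']
  · have h0 := congrArg (fun A : H →L[ℂ] H => A (e 0)) h
    simp only [mul_apply_eq_comp, smul_apply, hS,
      e.star_weightedShift_apply_succ hDS, e.star_weightedShift_apply_zero hDS, map_zero,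
      smul_zero, zero_add, pow_one, smul_eq_zero, map_eq_zero] at h0
    rcases h0 with hl0 | he0
    · simp [hl0] at hl
    · exact e.orthonormal.ne_zero 0 he0

/-- With `S` the unilateral shift on `ℓ²(ℕ)` (given by `S e_n = e_{n+1}` on an orthonormal
Hilbert basis `e`) and `d(λ)` the diagonal operator `d(λ) e_n = λ^n e_n` for a unimodular
`λ ≠ 1`, the operators `u := d(λ) S` and `v := S` are isometries with `u v = λ • (v u)`
but `u* v ≠ conj(λ) • (v u*)`. -/
theorem stmt_1 {H : Type*} [NormedAddCommGroup H] [InnerProductSpace ℂ H] [CompleteSpace H]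
    (e : HilbertBasis ℕ ℂ H) (l : ℂ) (hl : ‖l‖ = 1) (hl1 : l ≠ 1)
    (S D : H →L[ℂ] H)
    (hS : ∀ n : ℕ, S (e n) = e (n + 1))
    (hD : ∀ n : ℕ, D (e n) = l ^ n • e n)
    (u v : H →L[ℂ] H) (hu : u = D * S) (hv : v = S) :
    star u * u = 1 ∧ star v * v = 1 ∧ u * v = l • (v * u) ∧
      star u * v ≠ (starRingEnd ℂ) l • (v * star u) :=
  stmt_1_general e l hl S D hS hD u v hu hv
end

section
/- Let A be a unital C*-algebra and u, v ∈ A isometries with u·v = λ·v·u for some λ ∈ ℂ with |λ| = 1. Define ū := u(1 − vv*) + (1 − uu*)v*. Then ū·ū* = ū*·ū = 1 − u·v·v*·u*. -/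
/-! With `p = 1 - vv*` and `q = 1 - uu*`, the isometry relations give `pv = 0`, `v*p = 0`,
`qu = 0` and `u*q = 0`, so all cross terms of `ūū*` and `ū*ū` vanish:
`ūū* = upu* + q = 1 - uvv*u*` and `ū*ū = p + vqv* = 1 - vuu*v*`.
Since `|λ| = 1`, the relation `uv = λvu` makes the range projections `(uv)(uv)*` and `(vu)(vu)*`
equal. -/

section Isometry

variable {A : Type*} [Ring A] [StarRing A] {u v : A}

lemma one_sub_mul_star_mul_self (hv : star v * v = 1) : (1 - v * star v) * v = 0 := by
  rw [sub_mul, one_mul, mul_assoc, hv, mul_one, sub_self]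

lemma star_mul_one_sub_mul_star (hv : star v * v = 1) : star v * (1 - v * star v) = 0 := by
  rw [mul_sub, mul_one, ← mul_assoc, hv, one_mul, sub_self]

lemma one_sub_mul_star_mul_one_sub (hv : star v * v = 1) :
    (1 - v * star v) * (1 - v * star v) = 1 - v * star v := by
  rw [mul_sub, mul_one, ← mul_assoc, one_sub_mul_star_mul_self hv, zero_mul, sub_zero]

lemma star_one_sub_mul_star : star (1 - v * star v) = 1 - v * star v := by
  simp only [star_sub, star_one, star_mul, star_star]

lemma mul_star_twisted_sum (hu : star u * u = 1) (hv : star v * v = 1) :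
    (u * (1 - v * star v) + (1 - u * star u) * star v) *
        star (u * (1 - v * star v) + (1 - u * star u) * star v)
      = 1 - u * v * star v * star u := by
  set p := 1 - v * star v
  set q := 1 - u * star u
  have hp : star p = p := star_one_sub_mul_star
  have hq : star q = q := star_one_sub_mul_star
  have hpp : p * p = p := one_sub_mul_star_mul_one_sub hv
  have hpv : p * v = 0 := one_sub_mul_star_mul_self hv
  have hvp : star v * p = 0 := star_mul_one_sub_mul_star hv
  have hqq : q * q = q := one_sub_mul_star_mul_one_sub hu
  calc (u * p + q * star v) * star (u * p + q * star v)
      = u * (p * p) * star u + u * (p * v) * q + q * (star v * p) * star u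
          + q * (star v * v) * q := by
        simp only [star_add, star_mul, star_star, hp, hq, add_mul, mul_add, mul_assoc]
        abel
    _ = u * p * star u + q := by
        simp only [hpp, hpv, hvp, hv, hqq, mul_zero, zero_mul, add_zero, mul_one]
    _ = 1 - u * v * star v * star u := by simp only [p, q]; noncomm_ring

lemma star_mul_twisted_sum (hu : star u * u = 1) (hv : star v * v = 1) :
    star (u * (1 - v * star v) + (1 - u * star u) * star v) *
        (u * (1 - v * star v) + (1 - u * star u) * star v)
      = 1 - v * u * star u * star v := by
  set p := 1 - v * star v
  set q := 1 - u * star u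
  have hp : star p = p := star_one_sub_mul_star
  have hq : star q = q := star_one_sub_mul_star
  have hpp : p * p = p := one_sub_mul_star_mul_one_sub hv
  have hqq : q * q = q := one_sub_mul_star_mul_one_sub hu
  have hqu : q * u = 0 := one_sub_mul_star_mul_self hu
  have huq : star u * q = 0 := star_mul_one_sub_mul_star hu
  calc star (u * p + q * star v) * (u * p + q * star v)
      = p * (star u * u) * p + p * (star u * q) * star v + v * (q * u) * p
          + v * (q * q) * star v := by
        simp only [star_add, star_mul, star_star, hp, hq, add_mul, mul_add, mul_assoc]
        abel
    _ = p + v * q * star v := by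
        simp only [hu, hpp, huq, hqu, hqq, mul_one, mul_zero, zero_mul, add_zero]
    _ = 1 - v * u * star u * star v := by simp only [p, q]; noncomm_ring

end Isometry

lemma smul_mul_star_smul {R A : Type*} [CommRing R] [StarRing R] [Ring A] [StarRing A]
    [Module R A] [IsScalarTower R A A] [SMulCommClass R A A] [StarModule R A]
    {c : R} (hc : c * star c = 1) (x : A) :
    c • x * star (c • x) = x * star x := by
  rw [star_smul, smul_mul_smul_comm, hc, one_smul]

theorem stmt_2_general {A : Type*} [NormedRing A] [StarRing A]
    [NormedAlgebra ℂ A] [StarModule ℂ A]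
    (u v : A) (hu : star u * u = 1) (hv : star v * v = 1)
    (l : ℂ) (hl : ‖l‖ = 1) (huv : u * v = l • (v * u)) :
    (u * (1 - v * star v) + (1 - u * star u) * star v) *
        star (u * (1 - v * star v) + (1 - u * star u) * star v)
      = 1 - u * v * star v * star u ∧
    star (u * (1 - v * star v) + (1 - u * star u) * star v) *
        (u * (1 - v * star v) + (1 - u * star u) * star v)
      = 1 - u * v * star v * star u := by
  have hl' : l * star l = 1 := by
    rw [mul_comm]
    simpa [hl] using Complex.conj_mul' l
  have range_proj_eq : u * v * star v * star u = v * u * star u * star v := by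
    simpa only [← huv, star_mul, ← mul_assoc] using smul_mul_star_smul hl' (v * u)
  refine ⟨mul_star_twisted_sum hu hv, ?_⟩
  rw [star_mul_twisted_sum hu hv, range_proj_eq]

/-- For isometries `u, v` with `uv = λ•vu`, `ū := u(1-vv*) + (1-uu*)v*` satisfies
`ū ū* = ū* ū = 1 - uvv*u*`. -/
theorem stmt_2 {A : Type*} [NormedRing A] [StarRing A] [CStarRing A]
    [NormedAlgebra ℂ A] [StarModule ℂ A] [CompleteSpace A]
    (u v : A) (hu : star u * u = 1) (hv : star v * v = 1)
    (l : ℂ) (hl : ‖l‖ = 1) (huv : u * v = l • (v * u)) :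
    (u * (1 - v * star v) + (1 - u * star u) * star v) *
        star (u * (1 - v * star v) + (1 - u * star u) * star v)
      = 1 - u * v * star v * star u ∧
    star (u * (1 - v * star v) + (1 - u * star u) * star v) *
        (u * (1 - v * star v) + (1 - u * star u) * star v)
      = 1 - u * v * star v * star u :=
  stmt_2_general u v hu hv l hl huv
end

section
/- Let A be a unital C*-algebra and u, v ∈ A isometries with u·v = λ·v·u, |λ| = 1. Then u*·v = conj(λ)·v·u* holds if and only if (1 − uu*)·v*·u·(1 − vv*) = 0. -/
/-- For isometries `u, v` with `uv = λ•vu`, the relation `u* v = conj(λ)•(v u*)` holds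
iff `(1-uu*) v* u (1-vv*) = 0`. -/
theorem stmt_7 {A : Type*} [NormedRing A] [StarRing A] [CStarRing A]
    [NormedAlgebra ℂ A] [StarModule ℂ A] [CompleteSpace A]
    (u v : A) (hu : star u * u = 1) (hv : star v * v = 1)
    (l : ℂ) (hl : ‖l‖ = 1) (huv : u * v = l • (v * u)) :
    star u * v = (starRingEnd ℂ) l • (v * star u) ↔
      (1 - u * star u) * star v * u * (1 - v * star v) = 0 := by
  have hll : (starRingEnd ℂ) l * l = 1 := by
    rw [Complex.conj_mul']
    norm_cast
    rw [hl]; norm_num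
  have h0 : (1 - u * star u) * u = 0 := by
    rw [sub_mul, one_mul, mul_assoc, hu, mul_one, sub_self]
  constructor
  · intro h
    -- star both sides of h: star v * u = l • (u * star v)
    have h' : star v * u = l • (u * star v) := by
      have := congrArg star h
      simpa [star_smul, mul_comm] using this
    have key : (1 - u * star u) * (star v * u) = 0 := by
      rw [h', mul_smul_comm, ← mul_assoc, h0, zero_mul, smul_zero]
    calc (1 - u * star u) * star v * u * (1 - v * star v)
        = ((1 - u * star u) * (star v * u)) * (1 - v * star v) := by
          rw [mul_assoc (1 - u * star u)]
      _ = 0 := by rw [key, zero_mul]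
  · intro h
    have hvu : v * u = (starRingEnd ℂ) l • (u * v) := by
      rw [huv, smul_smul, hll, one_smul]
    -- u* v* = l • (v* u*)
    have hA : (u * star u) * (star v * u) = l • (u * star v) := by
      have h1 : star u * star v = l • (star v * star u) := by
        have := congrArg star hvu
        simpa [star_smul] using this
      calc (u * star u) * (star v * u) = u * (star u * star v) * u := by
            noncomm_ring
        _ = l • (u * (star v * (star u * u))) := by
            rw [h1]; rw [mul_smul_comm, smul_mul_assoc]
            rw [mul_assoc, mul_assoc]
        _ = l • (u * star v) := by rw [hu, mul_one]
    have hB : (star v * u) * (v * star v) = l • (u * star v) := by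
      calc (star v * u) * (v * star v) = star v * (u * v) * star v := by
            noncomm_ring
        _ = l • ((star v * v) * (u * star v)) := by
            rw [huv, mul_smul_comm, smul_mul_assoc]; congr 1; noncomm_ring
        _ = l • (u * star v) := by rw [hv, one_mul]
    have key : star v * u = l • (u * star v) := by
      have hsplit : star v * u
          = (u * star u) * (star v * u)
            + ((1 - u * star u) * (star v * u)) * (v * star v)
            + (1 - u * star u) * star v * u * (1 - v * star v) := by
        noncomm_ring
      rw [hsplit, h, add_zero, hA]
      have : ((1 - u * star u) * (star v * u)) * (v * star v)
          = (1 - u * star u) * ((star v * u) * (v * star v)) := by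
        rw [mul_assoc]
      rw [this, hB, mul_smul_comm, ← mul_assoc, h0, zero_mul, smul_zero, add_zero]
    have := congrArg star key
    simpa [star_smul] using this
end

section
/- Let A be a unital C*-algebra and u, v ∈ A isometries with u·v = λ·v·u, |λ| = 1. Define ū := u(1 − vv*) + (1 − uu*)v* and p̄ := v(1 − uu*)v*. Then (1 − p̄)·ū·p̄ = (1 − vv*)·(1 − uu*)·v*, where 1 − p̄ is understood relative to the unit p = 1 − uvv*u* of the corner, i.e. (p − p̄)·ū·p̄ = (1 − vv*)(1 − uu*)v*. -/
/-! The whole computation rests on two facts about the defect projection `1 - uu*` of an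
isometry `u`: it kills `u` (on the right) and `u*` (on the left), and, because `uv` and `vu`
differ by a nonzero scalar, it also kills `vu`. Taking adjoints, `u*v*(1 - uu*) = 0`, which
lets `1 - uu*` pass through `v*` in `(1 - uu*) v* (1 - uu*) = v* (1 - uu*)`. -/

section Isometry

variable {A : Type*} [Ring A] [StarRing A] {u v : A}

theorem one_sub_mul_star_mul_of_isometry (hu : star u * u = 1) :
    (1 - u * star u) * u = 0 := by
  rw [sub_mul, one_mul, mul_assoc, hu, mul_one, sub_self]

theorem star_mul_one_sub_mul_star_of_isometry (hu : star u * u = 1) :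
    star u * (1 - u * star u) = 0 := by
  rw [mul_sub, mul_one, ← mul_assoc, hu, one_mul, sub_self]

theorem isIdempotentElem_one_sub_mul_star_of_isometry (hu : star u * u = 1) :
    IsIdempotentElem (1 - u * star u) := by
  rw [IsIdempotentElem, mul_sub, mul_one, ← mul_assoc, one_sub_mul_star_mul_of_isometry hu,
    zero_mul, sub_zero]

theorem one_sub_mul_star_mul_mul_of_mul_eq_smul {K : Type*} [Field K] [Algebra K A] {l : K}
    (hl : l ≠ 0) (hu : star u * u = 1) (huv : u * v = l • (v * u)) :
    (1 - u * star u) * (v * u) = 0 := by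
  rw [← inv_smul_smul₀ hl (v * u), ← huv, mul_smul_comm, ← mul_assoc,
    one_sub_mul_star_mul_of_isometry hu, zero_mul, smul_zero]

theorem star_mul_star_mul_one_sub_mul_star_of_mul_eq_smul {K : Type*} [Field K] [Algebra K A]
    {l : K} (hl : l ≠ 0) (hu : star u * u = 1) (huv : u * v = l • (v * u)) :
    star u * star v * (1 - u * star u) = 0 := by
  simpa only [star_mul, star_sub, star_one, star_star, star_zero, mul_assoc] using
    congrArg star (one_sub_mul_star_mul_mul_of_mul_eq_smul hl hu huv)

theorem ubar_mul_pbar (hu : star u * u = 1) (hv : star v * v = 1) :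
    (u * (1 - v * star v) + (1 - u * star u) * star v) * (v * (1 - u * star u) * star v) =
      (1 - u * star u) * star v := by
  calc (u * (1 - v * star v) + (1 - u * star u) * star v) * (v * (1 - u * star u) * star v)
      = u * ((1 - v * star v) * v) * ((1 - u * star u) * star v)
        + (1 - u * star u) * (star v * v) * (1 - u * star u) * star v := by noncomm_ring
    _ = (1 - u * star u) * star v := by
      rw [one_sub_mul_star_mul_of_isometry hv, hv, mul_one,
        isIdempotentElem_one_sub_mul_star_of_isometry hu, mul_zero, zero_mul, zero_add]

theorem pbar_mul_one_sub_mul_star_mul_star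
    (huv : star u * star v * (1 - u * star u) = 0) :
    v * (1 - u * star u) * star v * ((1 - u * star u) * star v) =
      v * star v * ((1 - u * star u) * star v) := by
  have hpass : (1 - u * star u) * star v * (1 - u * star u) = star v * (1 - u * star u) := by
    rw [sub_mul, one_mul, sub_mul, mul_assoc u, mul_assoc u, huv, mul_zero, sub_zero]
  calc v * (1 - u * star u) * star v * ((1 - u * star u) * star v)
      = v * ((1 - u * star u) * star v * (1 - u * star u)) * star v := by noncomm_ring
    _ = v * star v * ((1 - u * star u) * star v) := by rw [hpass]; noncomm_ring

theorem corner_sub_pbar_mul_ubar_mul_pbar (hu : star u * u = 1) (hv : star v * v = 1)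
    (huv : star u * star v * (1 - u * star u) = 0) :
    ((1 - u * v * star v * star u) - v * (1 - u * star u) * star v) *
        (u * (1 - v * star v) + (1 - u * star u) * star v) *
        (v * (1 - u * star u) * star v)
      = (1 - v * star v) * (1 - u * star u) * star v := by
  have hcorner : u * v * star v * star u * ((1 - u * star u) * star v) = 0 := by
    rw [← mul_assoc, mul_assoc (u * v * star v), star_mul_one_sub_mul_star_of_isometry hu,
      mul_zero, zero_mul]
  calc _ = ((1 - u * v * star v * star u) - v * (1 - u * star u) * star v) *
        ((1 - u * star u) * star v) := by rw [mul_assoc, ubar_mul_pbar hu hv]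
    _ = (1 - u * star u) * star v - u * v * star v * star u * ((1 - u * star u) * star v)
        - v * (1 - u * star u) * star v * ((1 - u * star u) * star v) := by noncomm_ring
    _ = (1 - v * star v) * (1 - u * star u) * star v := by
      rw [hcorner, pbar_mul_one_sub_mul_star_mul_star huv]; noncomm_ring

end Isometry

theorem stmt_9_general {A : Type*} [NormedRing A] [StarRing A]
    [NormedAlgebra ℂ A]
    (u v : A) (hu : star u * u = 1) (hv : star v * v = 1)
    (l : ℂ) (hl : ‖l‖ = 1) (huv : u * v = l • (v * u)) :
    ((1 - u * v * star v * star u) - v * (1 - u * star u) * star v) *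
        (u * (1 - v * star v) + (1 - u * star u) * star v) *
        (v * (1 - u * star u) * star v)
      = (1 - v * star v) * (1 - u * star u) * star v := by
  have hl0 : l ≠ 0 := norm_ne_zero_iff.mp (hl ▸ one_ne_zero)
  exact corner_sub_pbar_mul_ubar_mul_pbar hu hv
    (star_mul_star_mul_one_sub_mul_star_of_mul_eq_smul hl0 hu huv)

/-- For isometries `u, v` with `uv = λ•vu`, with `p := 1 - uvv*u*`,
`ū := u(1-vv*) + (1-uu*)v*` and `p̄ := v(1-uu*)v*`, one has
`(p - p̄) ū p̄ = (1-vv*)(1-uu*)v*`. -/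
theorem stmt_9 {A : Type*} [NormedRing A] [StarRing A] [CStarRing A]
    [NormedAlgebra ℂ A] [StarModule ℂ A] [CompleteSpace A]
    (u v : A) (hu : star u * u = 1) (hv : star v * v = 1)
    (l : ℂ) (hl : ‖l‖ = 1) (huv : u * v = l • (v * u)) :
    ((1 - u * v * star v * star u) - v * (1 - u * star u) * star v) *
        (u * (1 - v * star v) + (1 - u * star u) * star v) *
        (v * (1 - u * star u) * star v)
      = (1 - v * star v) * (1 - u * star u) * star v :=
  stmt_9_general u v hu hv l hl huv
end

section
/- Let A be a unital C*-algebra and u, v ∈ A isometries with u·v = λ·v·u, |λ| = 1. Set p := 1 − u·v·v*·u* and p̄ := v·(1 − u·u*)·v*. Then p·(1 − p̄) = p − p̄ = 1 − v·v*. In particular, v is a unitary if and only if p·(1 − p̄) = 0. -/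
/-!
Since `|λ| = 1`, the commutation relation gives `uv(uv)* = vu(vu)*`, so `1 - p = v(uu*)v*`.
Conjugation by the isometry `v` is multiplicative, and `uu*` is an idempotent orthogonal to
`1 - uu*`; hence `(1 - p)p̄ = 0`, i.e. `p p̄ = p̄`, and `p - p̄ = 1 - v(uu*)v* - v(1 - uu*)v* = 1 - vv*`.
-/

section Isometry

variable {R : Type*} [Ring R] [StarRing R] {u v : R}

lemma isIdempotentElem_mul_star_of_star_mul_self (hu : star u * u = 1) :
    IsIdempotentElem (u * star u) := by
  rw [IsIdempotentElem, mul_assoc, ← mul_assoc (star u), hu, one_mul]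

lemma conj_mul_conj_of_star_mul_self (hv : star v * v = 1) (a b : R) :
    v * a * star v * (v * b * star v) = v * (a * b) * star v := by
  calc v * a * star v * (v * b * star v) = v * a * (star v * v) * b * star v := by noncomm_ring
    _ = v * (a * b) * star v := by rw [hv, mul_one, mul_assoc v a b]

lemma one_sub_conj_mul_star_mul_conj_one_sub_mul_star (hu : star u * u = 1)
    (hv : star v * v = 1) :
    (1 - v * (u * star u) * star v) * (v * (1 - u * star u) * star v) =
      v * (1 - u * star u) * star v := by
  rw [sub_mul, one_mul, conj_mul_conj_of_star_mul_self hv,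
    (isIdempotentElem_mul_star_of_star_mul_self hu).mul_one_sub_self, mul_zero, zero_mul,
    sub_zero]

end Isometry

lemma smul_mul_star_smul_of_norm_eq_one {𝕜 A : Type*} [RCLike 𝕜] [Ring A] [StarRing A]
    [Algebra 𝕜 A] [StarModule 𝕜 A] {l : 𝕜} (hl : ‖l‖ = 1) (x : A) :
    l • x * star (l • x) = x * star x := by
  rw [star_smul, smul_mul_smul_comm, RCLike.star_def, RCLike.mul_conj, hl, RCLike.ofReal_one,
    one_pow, one_smul]

theorem stmt_11_general {A : Type*} [NormedRing A] [StarRing A]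
    [NormedAlgebra ℂ A] [StarModule ℂ A]
    (u v : A) (hu : star u * u = 1) (hv : star v * v = 1)
    (l : ℂ) (hl : ‖l‖ = 1) (huv : u * v = l • (v * u))
    (p pb : A)
    (hp : p = 1 - u * v * star v * star u)
    (hpb : pb = v * (1 - u * star u) * star v) :
    p * (1 - pb) = p - pb ∧ p - pb = 1 - v * star v ∧
    (v * star v = 1 ↔ p * (1 - pb) = 0) := by
  have hp' : p = 1 - v * (u * star u) * star v := by
    have h := smul_mul_star_smul_of_norm_eq_one hl (v * u)
    rw [← huv, star_mul, star_mul] at h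
    rw [hp, ← mul_assoc, mul_assoc (u * v), h, ← mul_assoc]
  have hppb : p * pb = pb := by
    rw [hp', hpb, one_sub_conj_mul_star_mul_conj_one_sub_mul_star hu hv]
  have hdiff : p - pb = 1 - v * star v := by
    rw [hp', hpb]
    noncomm_ring
  have hmul : p * (1 - pb) = p - pb := by rw [mul_sub, mul_one, hppb]
  refine ⟨hmul, hdiff, ?_⟩
  rw [hmul, hdiff, sub_eq_zero, eq_comm]

/-- For isometries `u, v` with `uv = λ•vu`, with `p := 1 - uvv*u*` and `p̄ := v(1-uu*)v*`,
one has `p(1-p̄) = p - p̄ = 1 - vv*`; in particular `v` is a unitary iff `p(1-p̄) = 0`. -/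
theorem stmt_11 {A : Type*} [NormedRing A] [StarRing A] [CStarRing A]
    [NormedAlgebra ℂ A] [StarModule ℂ A] [CompleteSpace A]
    (u v : A) (hu : star u * u = 1) (hv : star v * v = 1)
    (l : ℂ) (hl : ‖l‖ = 1) (huv : u * v = l • (v * u))
    (p pb : A)
    (hp : p = 1 - u * v * star v * star u)
    (hpb : pb = v * (1 - u * star u) * star v) :
    p * (1 - pb) = p - pb ∧ p - pb = 1 - v * star v ∧
    (v * star v = 1 ↔ p * (1 - pb) = 0) :=
  stmt_11_general u v hu hv l hl huv p pb hp hpb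
end

section
/- Let A be a unital C*-algebra and u, v ∈ A isometries satisfying both u·v = λ·v·u and u*·v = conj(λ)·v·u*, with |λ| = 1. Define e_{(a,b)(d,c)} := u^a v^b (1 − uu*)(1 − vv*) (v*)^c (u*)^d for a,b,c,d ∈ ℕ₀. Then these elements satisfy the matrix-unit relations: e_{(a,b)(d,c)}* = e_{(d,c)(a,b)} and e_{(a,b)(d,c)} · e_{(f,g)(i,h)} = δ_{df} δ_{cg} · e_{(a,b)(i,h)}. -/
/-! `p = (1 - uu*)(1 - vv*)` is a projection with `p u = p v = 0`: the twisted relations make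
`uu*` commute with `v` and `vv*` with `u` (the former also uses `|λ|² • 1 = 1`, obtained by
expanding `(uv)*(uv) = 1` with `uv = λ vu`). With `e_{(a,b)(d,c)} = (u^a v^b) p (u^d v^c)*`,
the product formula reduces to `p (u^d v^c)* (u^f v^g) p = δ_{df} δ_{cg} p`. If `d > f`,
cancelling leaves `v*^c u*^(d-f) v^g`; the twisted relation moves `u*^(d-f)` to the right up
to a scalar, where it is killed by `u* p = 0`; the case `d < f` is its adjoint, and for `d = f`
the same cancellation for `v` alone applies. -/

section TwistedCommutation

variable {R A : Type*} [CommSemiring R] [Semiring A] [Algebra R A] {x y : A} {μ : R}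

theorem mul_pow_eq_smul_of_mul_eq_smul (h : x * y = μ • (y * x)) (n : ℕ) :
    x * y ^ n = μ ^ n • (y ^ n * x) := by
  induction n with
  | zero => simp
  | succ n ih =>
    rw [pow_succ, ← mul_assoc, ih, smul_mul_assoc, mul_assoc, h, mul_smul_comm, smul_smul,
      ← mul_assoc, ← pow_succ, ← pow_succ]

theorem pow_mul_pow_eq_smul_of_mul_eq_smul (h : x * y = μ • (y * x)) (m n : ℕ) :
    x ^ m * y ^ n = μ ^ (m * n) • (y ^ n * x ^ m) := by
  induction m with
  | zero => simp
  | succ m ih =>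
    rw [pow_succ', mul_assoc, ih, mul_smul_comm, ← mul_assoc, mul_pow_eq_smul_of_mul_eq_smul h,
      smul_mul_assoc, smul_smul, ← pow_add, mul_assoc, ← pow_succ', Nat.succ_mul]

end TwistedCommutation

section Isometry

variable {A : Type*} [Ring A] [StarRing A] {s p : A}

theorem star_pow_mul_pow_add (hs : star s * s = 1) (c k : ℕ) :
    star s ^ c * s ^ (c + k) = s ^ k := by
  rw [pow_add, ← mul_assoc, pow_mul_pow_eq_one c hs, one_mul]

theorem star_pow_add_mul_pow (hs : star s * s = 1) (g k : ℕ) :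
    star s ^ (k + g) * s ^ g = star s ^ k := by
  rw [pow_add, mul_assoc, pow_mul_pow_eq_one g hs, mul_one]

theorem isStarProjection_mul_star_self (hs : star s * s = 1) : IsStarProjection (s * star s) :=
  ⟨by rw [IsIdempotentElem, mul_assoc, ← mul_assoc (star s), hs, one_mul],
    .mul_star_self s⟩

theorem one_sub_mul_star_self_mul (hs : star s * s = 1) : (1 - s * star s) * s = 0 := by
  rw [sub_mul, one_mul, mul_assoc, hs, mul_one, sub_self]

theorem IsStarProjection.star_mul_eq_zero (hp : IsStarProjection p) (hps : p * s = 0) :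
    star s * p = 0 := by
  rw [← hp.isSelfAdjoint.star_eq, ← star_mul, hps, star_zero]

theorem IsStarProjection.mul_star_pow_mul_pow_mul (hp : IsStarProjection p) (hs : star s * s = 1)
    (hps : p * s = 0) (c g : ℕ) :
    p * (star s ^ c * s ^ g) * p = if c = g then p else 0 := by
  rcases lt_trichotomy c g with hcg | rfl | hcg
  · obtain ⟨k, rfl⟩ := Nat.exists_eq_add_of_lt hcg
    rw [add_assoc, star_pow_mul_pow_add hs, pow_succ', ← mul_assoc, hps, zero_mul, zero_mul,
      if_neg (by omega)]
  · rw [pow_mul_pow_eq_one c hs, mul_one, hp.isIdempotentElem.eq, if_pos rfl]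
  · obtain ⟨k, rfl⟩ := Nat.exists_eq_add_of_lt hcg
    rw [show g + k + 1 = (k + 1) + g by omega, star_pow_add_mul_pow hs, pow_succ, mul_assoc,
      mul_assoc, hp.star_mul_eq_zero hps, mul_zero, mul_zero, if_neg (by omega)]

end Isometry

section TwoIsometries

variable {R A : Type*} [CommSemiring R] [Ring A] [StarRing A] [Algebra R A] {u v p : A} {μ : R}

theorem IsStarProjection.mul_star_mul_mul_eq_zero_of_lt (hp : IsStarProjection p)
    (hu : star u * u = 1) (hpu : p * u = 0) (huv : star u * v = μ • (v * star u))
    {d f : ℕ} (hfd : f < d) (c g : ℕ) :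
    p * (star (u ^ d * v ^ c) * (u ^ f * v ^ g)) * p = 0 := by
  obtain ⟨k, rfl⟩ := Nat.exists_eq_add_of_lt hfd
  have hmid : star (u ^ (f + k + 1) * v ^ c) * (u ^ f * v ^ g)
      = μ ^ ((k + 1) * g) • (star v ^ c * v ^ g * star u ^ (k + 1)) := by
    rw [star_mul, star_pow, star_pow, mul_assoc, ← mul_assoc (star u ^ _) (u ^ f),
      show f + k + 1 = (k + 1) + f by omega, star_pow_add_mul_pow hu,
      pow_mul_pow_eq_smul_of_mul_eq_smul huv, mul_smul_comm, mul_assoc]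
  have hup : star u ^ (k + 1) * p = 0 := by
    rw [pow_succ, mul_assoc, hp.star_mul_eq_zero hpu, mul_zero]
  rw [hmid, mul_smul_comm, smul_mul_assoc, mul_assoc p, mul_assoc, hup, mul_zero, mul_zero,
    smul_zero]

theorem IsStarProjection.mul_star_mul_mul_eq_ite (hp : IsStarProjection p)
    (hu : star u * u = 1) (hv : star v * v = 1) (hpu : p * u = 0) (hpv : p * v = 0)
    (huv : star u * v = μ • (v * star u)) (d c f g : ℕ) :
    p * (star (u ^ d * v ^ c) * (u ^ f * v ^ g)) * p = if d = f ∧ c = g then p else 0 := by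
  rcases lt_trichotomy d f with hdf | rfl | hdf
  · have h := congrArg star (hp.mul_star_mul_mul_eq_zero_of_lt hu hpu huv hdf g c)
    simp only [star_mul, star_star, hp.isSelfAdjoint.star_eq, star_zero, ← mul_assoc] at h
    rw [if_neg (by omega), star_mul, ← h]
    simp only [mul_assoc]
  · have hmid : star (u ^ d * v ^ c) * (u ^ d * v ^ g) = star v ^ c * v ^ g := by
      rw [star_mul, star_pow, star_pow, mul_assoc, ← mul_assoc (star u ^ d),
        pow_mul_pow_eq_one d hu, one_mul]
    rw [hmid, hp.mul_star_pow_mul_pow_mul hv hpv]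
    simp only [true_and]
  · rw [hp.mul_star_mul_mul_eq_zero_of_lt hu hpu huv hdf, if_neg (by omega)]

end TwoIsometries

section RangeProjections

variable {R A : Type*} [CommSemiring R] [StarRing R] [Ring A] [StarRing A] [Algebra R A]
  [StarModule R A] {u v : A} {μ : R}

theorem commute_mul_mul_star_of_twisted (huv : u * v = μ • (v * u))
    (huv' : star u * v = star μ • (v * star u)) : Commute u (v * star v) := by
  have hstar : star v * star u = star μ • (star u * star v) := by
    rw [← star_mul, huv, star_smul, star_mul]
  have h : Commute (star u) (v * star v) := by
    rw [Commute, SemiconjBy, ← mul_assoc, huv', mul_assoc, hstar, smul_mul_assoc, mul_smul_comm,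
      mul_assoc]
  simpa only [star_mul, star_star] using h.star_right

theorem star_mul_smul_one_of_twisted (hu : star u * u = 1) (hv : star v * v = 1)
    (huv : u * v = μ • (v * u)) : (star μ * μ) • (1 : A) = 1 := by
  calc (star μ * μ) • (1 : A) = star (μ • (v * u)) * (μ • (v * u)) := by
        rw [star_smul, smul_mul_smul_comm, star_mul, mul_assoc, ← mul_assoc (star v), hv,
          one_mul, hu]
    _ = 1 := by rw [← huv, star_mul, mul_assoc, ← mul_assoc (star u), hu, one_mul, hv]

theorem commute_mul_star_of_twisted (hu : star u * u = 1) (hv : star v * v = 1)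
    (huv : u * v = μ • (v * u)) (huv' : star u * v = star μ • (v * star u)) :
    Commute (u * star u) v := by
  rw [Commute, SemiconjBy, mul_assoc, huv', mul_smul_comm, ← mul_assoc, huv, smul_mul_assoc,
    smul_smul, ← smul_one_mul, star_mul_smul_one_of_twisted hu hv huv, one_mul, mul_assoc]

theorem isStarProjection_one_sub_mul_one_sub_of_twisted (hu : star u * u = 1)
    (hv : star v * v = 1) (huv : u * v = μ • (v * u))
    (huv' : star u * v = star μ • (v * star u)) :
    IsStarProjection ((1 - u * star u) * (1 - v * star v)) := by
  have h := commute_mul_star_of_twisted hu hv huv huv'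
  have h' : Commute (u * star u) (v * star v) :=
    h.mul_right (by simpa only [star_mul, star_star] using h.star_star)
  exact (isStarProjection_mul_star_self hu).one_sub.mul (isStarProjection_mul_star_self hv).one_sub
    ((Commute.one_right _).sub_right ((Commute.one_left _).sub_left h'))

theorem one_sub_mul_one_sub_mul_left_eq_zero (hu : star u * u = 1) (huv : u * v = μ • (v * u))
    (huv' : star u * v = star μ • (v * star u)) :
    (1 - u * star u) * (1 - v * star v) * u = 0 := by
  have h : Commute (1 - v * star v) u :=
    (Commute.one_left u).sub_left (commute_mul_mul_star_of_twisted huv huv').symm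
  rw [mul_assoc, h.eq, ← mul_assoc, one_sub_mul_star_self_mul hu, zero_mul]

end RangeProjections

theorem stmt_12_general {A : Type*} [NormedRing A] [StarRing A]
    [NormedAlgebra ℂ A] [StarModule ℂ A]
    (u v : A) (hu : star u * u = 1) (hv : star v * v = 1)
    (l : ℂ) (huv : u * v = l • (v * u))
    (huv' : star u * v = (starRingEnd ℂ) l • (v * star u))
    (e : ℕ → ℕ → ℕ → ℕ → A)
    (he : ∀ a b d c, e a b d c
      = u ^ a * v ^ b * (1 - u * star u) * (1 - v * star v) * (star v) ^ c * (star u) ^ d) :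
    (∀ a b d c, star (e a b d c) = e d c a b) ∧
    (∀ a b d c f g i h, e a b d c * e f g i h
      = if d = f ∧ c = g then e a b i h else 0) := by
  have hp := isStarProjection_one_sub_mul_one_sub_of_twisted hu hv huv huv'
  have hpu := one_sub_mul_one_sub_mul_left_eq_zero hu huv huv'
  set p := (1 - u * star u) * (1 - v * star v)
  have hpv : p * v = 0 := by rw [mul_assoc, one_sub_mul_star_self_mul hv, mul_zero]
  have he' : ∀ a b d c, e a b d c = u ^ a * v ^ b * p * star (u ^ d * v ^ c) := by
    intro a b d c
    simp only [he, p, star_mul, star_pow, mul_assoc]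
  refine ⟨fun a b d c => ?_, fun a b d c f g i h => ?_⟩
  · rw [he', he', star_mul, star_star, star_mul, hp.isSelfAdjoint.star_eq, ← mul_assoc]
  · calc e a b d c * e f g i h
        = u ^ a * v ^ b * (p * (star (u ^ d * v ^ c) * (u ^ f * v ^ g)) * p)
          * star (u ^ i * v ^ h) := by simp only [he', mul_assoc]
      _ = _ := by
        rw [hp.mul_star_mul_mul_eq_ite hu hv hpu hpv huv', he']
        split_ifs <;> simp only [mul_zero, zero_mul]

/-- For isometries `u, v` with both twisted relations `uv = λ•vu` and `u*v = conj(λ)•vu*`,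
the elements `e_{(a,b)(d,c)} := u^a v^b (1-uu*)(1-vv*) (v*)^c (u*)^d` satisfy the
matrix-unit relations. -/
theorem stmt_12 {A : Type*} [NormedRing A] [StarRing A] [CStarRing A]
    [NormedAlgebra ℂ A] [StarModule ℂ A] [CompleteSpace A]
    (u v : A) (hu : star u * u = 1) (hv : star v * v = 1)
    (l : ℂ) (hl : ‖l‖ = 1) (huv : u * v = l • (v * u))
    (huv' : star u * v = (starRingEnd ℂ) l • (v * star u))
    (e : ℕ → ℕ → ℕ → ℕ → A)
    (he : ∀ a b d c, e a b d c
      = u ^ a * v ^ b * (1 - u * star u) * (1 - v * star v) * (star v) ^ c * (star u) ^ d) :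
    (∀ a b d c, star (e a b d c) = e d c a b) ∧
    (∀ a b d c f g i h, e a b d c * e f g i h
      = if d = f ∧ c = g then e a b i h else 0) :=
  stmt_12_general u v hu hv l huv huv' e he
end

section
/- Let H be a Hilbert space and u, v ∈ B(H) isometries with u·v = λ·v·u for a unimodular λ. Let H₀ := {ξ ∈ H : for all n > 0 there exists ξ_n with ξ = (uv)ⁿ ξ_n}. Then H₀ is a closed subspace of H, u(H₀) = H₀ and v(H₀) = H₀; in particular the restrictions of u and v to H₀ are unitaries on H₀. -/
/-! Put `w = uv`. From `uv = λvu` we get `uw = λwu` and `vw = λ⁻¹wv`, so `u` and `v` map the range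
of every power `wⁿ` into itself, hence map `H₀ = ⋂ₙ range wⁿ` into itself. Conversely, if
`ξ = wξ₁` lies in every range, say `ξ = wⁿ⁺¹ζ = u(v wⁿζ)`, then injectivity of `u` gives
`vξ₁ = v wⁿζ ∈ range wⁿ`, so `ξ = u(vξ₁)` with `vξ₁ ∈ H₀`; the same argument applies to `v` after
writing `w = v(λu)`. `H₀` is closed as an intersection of ranges of isometries. -/

theorem mul_pow_eq_smul_pow_mul {R A : Type*} [CommMonoid R] [Monoid A] [MulAction R A]
    [IsScalarTower R A A] [SMulCommClass R A A] {a w : A} {c : R} (h : a * w = c • (w * a))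
    (n : ℕ) :
    a * w ^ n = c ^ n • (w ^ n * a) := by
  induction n with
  | zero => simp
  | succ n ih =>
    rw [pow_succ, ← mul_assoc, ih, smul_mul_assoc, mul_assoc, h, mul_smul_comm, smul_smul,
      ← mul_assoc, ← pow_succ, ← pow_succ]

theorem mul_mul_eq_smul_of_mul_eq_smul {R A : Type*} [Semigroup A] [SMul R A]
    [SMulCommClass R A A] {a b : A} {c : R} (hab : a * b = c • (b * a)) :
    a * (a * b) = c • (a * b * a) := by
  rw [hab, mul_smul_comm, ← mul_assoc, ← hab]

theorem mul_mul_eq_inv_smul_of_mul_eq_smul {R A : Type*} [GroupWithZero R] [Semigroup A]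
    [MulAction R A] [IsScalarTower R A A] {a b : A} {c : R} (hab : a * b = c • (b * a))
    (hc : c ≠ 0) : b * (a * b) = c⁻¹ • (a * b * b) := by
  rw [← mul_assoc, hab, smul_mul_assoc, smul_smul, inv_mul_cancel₀ hc, one_smul, mul_assoc]

namespace Module.End

section CommSemiring

variable {R M : Type*} [CommSemiring R] [AddCommMonoid M] [Module R M]
  {a b w : Module.End R M} {c d : R}

theorem coe_iInf_range_pow (w : Module.End R M) :
    ((⨅ n : ℕ, LinearMap.range (w ^ n) : Submodule R M) : Set M) =
      {x | ∀ n : ℕ, 0 < n → ∃ y, x = (w ^ n) y} := by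
  ext x
  simp only [Submodule.coe_iInf, Set.mem_iInter, SetLike.mem_coe, LinearMap.mem_range,
    Set.mem_ofPred_eq, eq_comm (a := x)]
  exact ⟨fun h n _ ↦ h n, fun h n ↦ n.eq_zero_or_pos.elim (fun hn ↦ ⟨x, by simp [hn]⟩) (h n)⟩

theorem map_iInf_range_pow_le (h : a * w = c • (w * a)) :
    (⨅ n : ℕ, LinearMap.range (w ^ n)).map a ≤ ⨅ n : ℕ, LinearMap.range (w ^ n) := by
  rintro _ ⟨x, hx, rfl⟩
  simp only [SetLike.mem_coe, Submodule.mem_iInf, LinearMap.mem_range] at hx ⊢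
  intro n
  obtain ⟨y, rfl⟩ := hx n
  exact ⟨c ^ n • a y, by simpa using congr($(mul_pow_eq_smul_pow_mul h n) y).symm⟩

theorem iInf_range_pow_le_map (hw : w = a * b) (ha : Function.Injective a)
    (hb : b * w = c • (w * b)) :
    ⨅ n : ℕ, LinearMap.range (w ^ n) ≤ (⨅ n : ℕ, LinearMap.range (w ^ n)).map a := by
  intro x hx
  simp only [Submodule.mem_iInf, LinearMap.mem_range] at hx
  obtain ⟨x₁, hx₁⟩ := hx 1
  have hab : a (b x₁) = x := by rw [← hx₁, pow_one, hw, mul_apply]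
  refine ⟨b x₁, ?_, hab⟩
  simp only [SetLike.mem_coe, Submodule.mem_iInf, LinearMap.mem_range]
  intro n
  obtain ⟨y, hy⟩ := hx (n + 1)
  refine ⟨c ^ n • b y, ha ?_⟩
  have hbw : (w ^ n) (c ^ n • b y) = b ((w ^ n) y) := by
    simpa using congr($(mul_pow_eq_smul_pow_mul hb n) y).symm
  rw [hbw, hab, ← hy, pow_succ', hw, mul_apply, mul_apply]

theorem map_iInf_range_pow_eq (hw : w = a * b) (ha : Function.Injective a)
    (haw : a * w = c • (w * a)) (hbw : b * w = d • (w * b)) :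
    (⨅ n : ℕ, LinearMap.range (w ^ n)).map a = ⨅ n : ℕ, LinearMap.range (w ^ n) :=
  (map_iInf_range_pow_le haw).antisymm (iInf_range_pow_le_map hw ha hbw)

end CommSemiring

section Field

variable {K M : Type*} [Field K] [AddCommMonoid M] [Module K M] {a b : Module.End K M} {c : K}

theorem map_iInf_range_pow_mul_left (hab : a * b = c • (b * a)) (hc : c ≠ 0)
    (ha : Function.Injective a) :
    (⨅ n : ℕ, LinearMap.range ((a * b) ^ n)).map a = ⨅ n : ℕ, LinearMap.range ((a * b) ^ n) :=
  map_iInf_range_pow_eq rfl ha (mul_mul_eq_smul_of_mul_eq_smul hab)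
    (mul_mul_eq_inv_smul_of_mul_eq_smul hab hc)

theorem map_iInf_range_pow_mul_right (hab : a * b = c • (b * a)) (hc : c ≠ 0)
    (hb : Function.Injective b) :
    (⨅ n : ℕ, LinearMap.range ((a * b) ^ n)).map b = ⨅ n : ℕ, LinearMap.range ((a * b) ^ n) :=
  map_iInf_range_pow_eq (b := c • a) (by rw [hab, mul_smul_comm]) hb
    (mul_mul_eq_inv_smul_of_mul_eq_smul hab hc)
    (by rw [smul_mul_assoc, mul_mul_eq_smul_of_mul_eq_smul hab, mul_smul_comm])

end Field

end Module.End

namespace ContinuousLinearMap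

variable {𝕜 H : Type*} [RCLike 𝕜] [NormedAddCommGroup H] [InnerProductSpace 𝕜 H] [CompleteSpace H]
  {w : H →L[𝕜] H}

theorem injective_of_star_mul_self_eq_one (hw : star w * w = 1) : Function.Injective w :=
  Function.LeftInverse.injective (g := ⇑(star w)) fun x ↦ by simpa using congr($hw x)

theorem isClosed_iInf_range_pow (hw : star w * w = 1) :
    IsClosed ((⨅ n : ℕ, LinearMap.range ((w : H →ₗ[𝕜] H) ^ n) : Submodule 𝕜 H) : Set H) := by
  simp only [Submodule.coe_iInf, ← toLinearMap_pow, LinearMap.coe_range, coe_coe]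
  refine isClosed_iInter fun n ↦ ?_
  have : adjoint (w ^ n) ∘L w ^ n = 1 := by
    rw [← star_eq_adjoint, ← mul_def, star_pow, pow_mul_pow_eq_one n hw]
  exact ((w ^ n).isometry_iff_adjoint_comp_self.mpr this).isClosedEmbedding.isClosed_range

end ContinuousLinearMap

/-- For isometries `u, v` on a Hilbert space with `u v = λ • (v u)`, `λ` unimodular, the set
`H₀ = {ξ | ∀ n > 0, ∃ ξₙ, ξ = (uv)ⁿ ξₙ}` is a closed subspace with `u(H₀) = H₀` and
`v(H₀) = H₀`; in particular the restrictions of `u` and `v` to `H₀` are unitaries. -/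
theorem stmt_16 {H : Type*} [NormedAddCommGroup H] [InnerProductSpace ℂ H] [CompleteSpace H]
    (u v : H →L[ℂ] H) (hu : star u * u = 1) (hv : star v * v = 1)
    (l : ℂ) (hl : ‖l‖ = 1) (huv : u * v = l • (v * u))
    (H0 : Set H)
    (hH0 : H0 = {ξ : H | ∀ n : ℕ, 0 < n → ∃ ξn : H, ξ = ((u * v) ^ n) ξn}) :
    IsClosed H0 ∧ (∃ K : Submodule ℂ H, (K : Set H) = H0) ∧
      u '' H0 = H0 ∧ v '' H0 = H0 := by
  have hl0 : l ≠ 0 := norm_ne_zero_iff.mp (hl ▸ one_ne_zero)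
  have hUV : (u : Module.End ℂ H) * v = l • ((v : Module.End ℂ H) * u) := by
    simpa using congr(($huv : Module.End ℂ H))
  have hK : H0 = ((⨅ n : ℕ, LinearMap.range (((u : Module.End ℂ H) * (v : Module.End ℂ H)) ^ n) :
      Submodule ℂ H) : Set H) := by
    rw [hH0, Module.End.coe_iInf_range_pow]
    simp only [← ContinuousLinearMap.toLinearMap_mul, ← ContinuousLinearMap.toLinearMap_pow,
      ContinuousLinearMap.coe_coe]
  have huv_iso : star (u * v) * (u * v) = 1 := by
    rw [star_mul, mul_assoc, ← mul_assoc (star u), hu, one_mul, hv]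
  refine ⟨by simpa [hK] using ContinuousLinearMap.isClosed_iInf_range_pow huv_iso,
    ⟨_, hK.symm⟩, ?_, ?_⟩
  · rw [hK, ← ContinuousLinearMap.coe_coe u, ← Submodule.map_coe,
      Module.End.map_iInf_range_pow_mul_left hUV hl0
        (ContinuousLinearMap.injective_of_star_mul_self_eq_one hu)]
  · rw [hK, ← ContinuousLinearMap.coe_coe v, ← Submodule.map_coe,
      Module.End.map_iInf_range_pow_mul_right hUV hl0
        (ContinuousLinearMap.injective_of_star_mul_self_eq_one hv)]
end

section
/- Let A be a unital C*-algebra and u, v ∈ A isometries with u·v = λ·v·u, |λ| = 1. Then for any fixed *-monomial x in u, v and any N larger than the number of letters of x, one has (v*)^N (u*)^N · x · (1 − v v*) = 0. -/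
private lemma star_list_prod {R : Type*} [Monoid R] [StarMul R] :
    ∀ l : List R, star l.prod = (l.map star).reverse.prod := by
  intro l
  induction l with
  | nil => simp
  | cons a t ih => simp [star_mul, ih]

section helpers
variable {A : Type*} [Ring A] [Module ℂ A] [IsScalarTower ℂ A A] [SMulCommClass ℂ A A]
variable (u v : A) (l : ℂ)

private lemma vu_pow' (hl0 : l ≠ 0) (huv : u * v = l • (v * u)) :
    ∀ m : ℕ, v * u ^ m = (l⁻¹) ^ m • (u ^ m * v) := by
  have hvu : v * u = l⁻¹ • (u * v) := by
    rw [huv, smul_smul, inv_mul_cancel₀ hl0, one_smul]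
  intro m
  induction m with
  | zero => simp
  | succ m ih =>
    rw [pow_succ', ← mul_assoc, hvu, smul_mul_assoc, mul_assoc, ih, mul_smul_comm,
      smul_smul, ← pow_succ', ← mul_assoc, ← pow_succ']

private lemma pow_vu (hl0 : l ≠ 0) (huv : u * v = l • (v * u)) (m : ℕ) :
    u ^ m * v = l ^ m • (v * u ^ m) := by
  rw [vu_pow' u v l hl0 huv m, smul_smul, ← mul_pow, mul_inv_cancel₀ hl0, one_pow, one_smul]

private lemma vvstar_fix [StarRing A] (hv : star v * v = 1)
    (hl0 : l ≠ 0) (huv : u * v = l • (v * u)) (m n : ℕ) :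
    (v * star v) * (u ^ m * v ^ (n + 1)) = u ^ m * v ^ (n + 1) := by
  rw [mul_assoc, pow_succ' v n, ← mul_assoc (u ^ m), pow_vu u v l hl0 huv m,
    smul_mul_assoc, mul_smul_comm, mul_assoc v (u ^ m), ← mul_assoc (star v), hv, one_mul,
    mul_smul_comm, ← mul_assoc v (u ^ m), vu_pow' u v l hl0 huv m, smul_mul_assoc,
    smul_smul]

private lemma key [StarRing A] (hu : star u * u = 1) (hv : star v * v = 1)
    (hl0 : l ≠ 0) (huv : u * v = l • (v * u)) :
    ∀ (w : List (Fin 4)) (N : ℕ), w.length < N →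
      ∃ (j : ℤ) (m n : ℕ), N ≤ m + w.length ∧ N ≤ n + w.length ∧
        (w.map (fun i => ![u, v, star u, star v] i)).prod * (u ^ N * v ^ N) =
          l ^ j • (u ^ m * v ^ n) := by
  intro w
  induction w with
  | nil => intro N _; exact ⟨0, N, N, by simp, by simp, by simp⟩
  | cons a t ih =>
    intro N hN
    have ht : t.length < N := by simp at hN; omega
    obtain ⟨j, m, n, hm, hn, heq⟩ := ih N ht
    have hlen : (a :: t).length = t.length + 1 := rfl
    have hm1 : 1 ≤ m := by simp at hN; omega
    have hn1 : 1 ≤ n := by simp at hN; omega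
    rw [List.map_cons, List.prod_cons, mul_assoc, heq]
    fin_cases a
    · refine ⟨j, m + 1, n, by omega, by omega, ?_⟩
      show u * (l ^ j • (u ^ m * v ^ n)) = _
      rw [mul_smul_comm, ← mul_assoc, ← pow_succ']
    · refine ⟨j - m, m, n + 1, by omega, by omega, ?_⟩
      show v * (l ^ j • (u ^ m * v ^ n)) = _
      rw [mul_smul_comm, ← mul_assoc, vu_pow' u v l hl0 huv m, smul_mul_assoc, smul_smul,
        mul_assoc, ← pow_succ']
      congr 1
      rw [inv_pow, ← zpow_natCast l m, ← zpow_neg, ← zpow_add₀ hl0, sub_eq_add_neg]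
    · obtain ⟨m', rfl⟩ : ∃ m', m = m' + 1 := ⟨m - 1, by omega⟩
      refine ⟨j, m', n, by omega, by omega, ?_⟩
      show star u * (l ^ j • (u ^ (m' + 1) * v ^ n)) = _
      rw [mul_smul_comm, ← mul_assoc, pow_succ', ← mul_assoc, hu, one_mul]
    · obtain ⟨n', rfl⟩ : ∃ n', n = n' + 1 := ⟨n - 1, by omega⟩
      refine ⟨j + m, m, n', by omega, by omega, ?_⟩
      show star v * (l ^ j • (u ^ m * v ^ (n' + 1))) = _
      rw [mul_smul_comm, pow_succ', ← mul_assoc (u ^ m), pow_vu u v l hl0 huv m,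
        smul_mul_assoc, mul_smul_comm, smul_smul, mul_assoc v, ← mul_assoc (star v), hv,
        one_mul, ← zpow_natCast l m, ← zpow_add₀ hl0]
end helpers

/-- For isometries `u, v` with `uv = λ•vu`: for any *-monomial `x` in `u, v, u*, v*`
(encoded as a word `w` over a four-letter alphabet) and any `N` larger than the number of
letters of `x`, one has `(v*)^N (u*)^N x (1 - vv*) = 0`. -/
theorem stmt_19 {A : Type*} [NormedRing A] [StarRing A] [CStarRing A]
    [NormedAlgebra ℂ A] [StarModule ℂ A] [CompleteSpace A]
    (u v : A) (hu : star u * u = 1) (hv : star v * v = 1)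
    (l : ℂ) (hl : ‖l‖ = 1) (huv : u * v = l • (v * u)) :
    ∀ (w : List (Fin 4)) (N : ℕ), w.length < N →
      (star v) ^ N * (star u) ^ N * (w.map (fun i => ![u, v, star u, star v] i)).prod *
        (1 - v * star v) = 0 := by
  intro w N hN
  have hl0 : l ≠ 0 := by intro h; rw [h, norm_zero] at hl; exact one_ne_zero hl.symm
  set f : Fin 4 → A := fun i => ![u, v, star u, star v] i with hf
  set g : Fin 4 → Fin 4 := fun i => ![2, 3, 0, 1] i with hg
  rw [← star_eq_zero]
  have hstarP : star ((w.map f).prod) = ((w.reverse.map g).map f).prod := by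
    rw [star_list_prod, List.map_map]
    have : (star ∘ f) = f ∘ g := by
      funext i; fin_cases i <;> simp [hf, hg]
    rw [this]
    simp [List.map_map]
  have hlen' : (w.reverse.map g).length < N := by simpa using hN
  obtain ⟨j, m, n, hm, hn, heq⟩ := key u v l hu hv hl0 huv (w.reverse.map g) N hlen'
  obtain ⟨n', rfl⟩ : ∃ n', n = n' + 1 := ⟨n - 1, by omega⟩
  simp only [star_mul, star_sub, star_one, star_star, star_pow]
  rw [← mul_assoc, ← mul_assoc, mul_assoc _ (u ^ N) (v ^ N), mul_assoc _ (star ((w.map f).prod)),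
    hstarP, heq, sub_mul, one_mul, mul_smul_comm,
    vvstar_fix u v l hv hl0 huv m n', sub_self]
end
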